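/- arXiv:1805.03003 — 2 statements merged into one kernel-verified Lean document; each statement's English description precedes it below -/
import Mathlib

section
/- The Taylor expansion of sec²(z) around z = 0 is sec²(z) = Σ_{j≥0} b_j z^{2j}, where b_j = (−1)^j (2j+1) 2^{2j+2} (2^{2j+2} − 1) B_{2j+2} / (2j+2)! and B_n denotes the n-th Bernoulli number. -/
/-!
Write `E = e^{2iX}`. The Bernoulli generating function gives `X cot X = iX + 2iX / (E - 1)` as a
formal power series, and `tan X = cot X - 2 cot 2X` then yields a series `T` with
`T (E + 1) = -i (E - 1)`. Differentiating, `T' (E + 1)² = 4E`, i.e. `T' · cos² = 1` formally, and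
the coefficients of `T'` are the claimed ones (they vanish in odd degree because odd Bernoulli
numbers do). Analytically, `1 / cos²` is holomorphic on `‖z‖ < π/2`; the Cauchy product of its
Taylor series with the entire series of `cos²` sums to `1` near `0`, so its Taylor series is the
formal inverse of that of `cos²`, which is `T'`.
-/

open PowerSeries Complex Filter Topology NNReal ENNReal

namespace PowerSeries

theorem derivative_rescale {A : Type*} [CommRing A] (a : A) (φ : A⟦X⟧) :
    d⁄dX A (rescale a φ) = C a * rescale a (d⁄dX A φ) := by
  ext n
  simp only [coeff_derivative, coeff_rescale, coeff_C_mul, pow_succ]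
  ring

theorem rescale_C {A : Type*} [CommSemiring A] (a c : A) : rescale a (C c) = C c := by
  ext (_ | n) <;> simp [coeff_rescale, coeff_C]

end PowerSeries

section PowerSeriesSum

variable {𝕜 : Type*} [NontriviallyNormedField 𝕜]

theorem PowerSeries.eq_of_eventually_hasSum {φ ψ : 𝕜⟦X⟧} {f : 𝕜 → 𝕜}
    (hφ : ∀ᶠ w in 𝓝 0, HasSum (fun n => coeff n φ * w ^ n) (f w))
    (hψ : ∀ᶠ w in 𝓝 0, HasSum (fun n => coeff n ψ * w ^ n) (f w)) : φ = ψ := by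
  have hasFPowerSeriesAt (χ : 𝕜⟦X⟧)
      (hχ : ∀ᶠ w in 𝓝 0, HasSum (fun n => coeff n χ * w ^ n) (f w)) :
      HasFPowerSeriesAt f (FormalMultilinearSeries.ofScalars 𝕜 fun n => coeff n χ) 0 := by
    rw [hasFPowerSeriesAt_iff]
    simpa [mul_comm] using hχ
  ext n
  simpa using congrArg (·.coeff n)
    ((hasFPowerSeriesAt φ hφ).eq_formalMultilinearSeries (hasFPowerSeriesAt ψ hψ))

theorem PowerSeries.hasSum_coeff_mul_mul_pow {R : Type*} [NormedCommRing R] [CompleteSpace R]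
    {φ ψ : R⟦X⟧} {w : R} (hφ : Summable fun n => ‖coeff n φ * w ^ n‖)
    (hψ : Summable fun n => ‖coeff n ψ * w ^ n‖) :
    HasSum (fun n => coeff n (φ * ψ) * w ^ n)
      ((∑' n, coeff n φ * w ^ n) * ∑' n, coeff n ψ * w ^ n) := by
  have hterm (n : ℕ) : coeff n (φ * ψ) * w ^ n =
      ∑ kl ∈ Finset.HasAntidiagonal.antidiagonal n,
        coeff kl.1 φ * w ^ kl.1 * (coeff kl.2 ψ * w ^ kl.2) := by
    rw [coeff_mul, Finset.sum_mul]
    refine Finset.sum_congr rfl fun kl hkl => ?_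
    rw [← Finset.HasAntidiagonal.mem_antidiagonal.1 hkl, pow_add]
    ring
  simp_rw [hterm, tsum_mul_tsum_eq_tsum_sum_antidiagonal_of_summable_norm hφ hψ]
  exact (summable_norm_sum_mul_antidiagonal_of_summable_norm hφ hψ).of_norm.hasSum

theorem FormalMultilinearSeries.summable_norm_coeff_mul_pow
    (p : FormalMultilinearSeries 𝕜 𝕜 𝕜) {w : 𝕜} (hw : ‖w‖ₑ < p.radius) :
    Summable fun n => ‖p.coeff n * w ^ n‖ := by
  simpa [norm_mul, norm_pow, p.norm_apply_eq_norm_coef] using p.summable_norm_mul_pow hw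

variable {f g : 𝕜 → 𝕜} {p q : FormalMultilinearSeries 𝕜 𝕜 𝕜} {R : ℝ≥0∞}

theorem HasFPowerSeriesOnBall.hasSum_coeff_mul_pow (hf : HasFPowerSeriesOnBall f p 0 R) {w : 𝕜}
    (hw : w ∈ Metric.eball 0 R) :
    HasSum (fun n => coeff n (PowerSeries.mk p.coeff) * w ^ n) (f w) := by
  simpa [mul_comm] using hf.hasSum hw

theorem HasFPowerSeriesOnBall.mk_coeff_mul_eq_one [CompleteSpace 𝕜]
    (hf : HasFPowerSeriesOnBall f p 0 R) (hg : HasFPowerSeriesOnBall g q 0 R)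
    (hfg : ∀ᶠ w in 𝓝 0, f w * g w = 1) :
    PowerSeries.mk p.coeff * PowerSeries.mk q.coeff = 1 := by
  refine eq_of_eventually_hasSum (f := fun _ => 1) ?_ (Eventually.of_forall fun w => ?_)
  · filter_upwards [Metric.eball_mem_nhds (0 : 𝕜) hf.r_pos, hfg] with w hw hfgw
    have hwp : ‖w‖ₑ < p.radius := by simpa using lt_of_lt_of_le hw hf.r_le
    have hwq : ‖w‖ₑ < q.radius := by simpa using lt_of_lt_of_le hw hg.r_le
    have := hasSum_coeff_mul_mul_pow (φ := PowerSeries.mk p.coeff) (ψ := PowerSeries.mk q.coeff)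
      (by simpa using p.summable_norm_coeff_mul_pow hwp)
      (by simpa using q.summable_norm_coeff_mul_pow hwq)
    rwa [(hf.hasSum_coeff_mul_pow hw).tsum_eq, (hg.hasSum_coeff_mul_pow hw).tsum_eq, hfgw]
      at this
  · convert hasSum_single (f := fun n => coeff n (1 : 𝕜⟦X⟧) * w ^ n) 0 fun n hn => by
      simp [coeff_one, hn]
    simp

end PowerSeriesSum

theorem Complex.cos_ne_zero_of_norm_lt {w : ℂ} (hw : ‖w‖ < Real.pi / 2) : cos w ≠ 0 := by
  refine cos_ne_zero_iff.2 fun k hk => hw.not_ge ?_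
  have hk1 : (1 : ℝ) ≤ |((2 * k + 1 : ℤ) : ℝ)| := by
    rw [← Int.cast_abs]
    exact_mod_cast Int.one_le_abs (by omega)
  rw [hk, show (2 * k + 1 : ℂ) * Real.pi / 2 = (((2 * k + 1 : ℤ) : ℝ) * (Real.pi / 2) : ℝ) by
    push_cast; ring, norm_real, Real.norm_eq_abs, abs_mul,
    abs_of_pos (by positivity : 0 < Real.pi / 2)]
  nlinarith [Real.pi_pos]

theorem Complex.cos_sq_eq_exp (w : ℂ) :
    cos w ^ 2 = 1 / 4 * (exp (2 * I * w) + exp (-(2 * I) * w) + 2) := by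
  have h1 : exp (2 * I * w) = exp (w * I) ^ 2 := by rw [sq, ← Complex.exp_add]; ring_nf
  have h2 : exp (-(2 * I) * w) = exp (-w * I) ^ 2 := by rw [sq, ← Complex.exp_add]; ring_nf
  have h12 : exp (w * I) * exp (-w * I) = 1 := by rw [← Complex.exp_add]; simp
  rw [cos, h1, h2]
  linear_combination (1 / 2 : ℂ) * h12

theorem hasSum_coeff_rescale_exp_mul_pow (a w : ℂ) :
    HasSum (fun n => coeff n (rescale a (exp ℂ)) * w ^ n) (Complex.exp (a * w)) := by
  have hterm : (fun n => coeff n (rescale a (exp ℂ)) * w ^ n) =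
      fun n => (a * w) ^ n / n.factorial := by
    ext n
    simp only [coeff_rescale, coeff_exp, eq_ratCast]
    push_cast
    ring
  rw [hterm, Complex.exp_eq_exp_ℂ]
  exact NormedSpace.expSeries_div_hasSum_exp (a * w)

noncomputable section

def expTwoIX : ℂ⟦X⟧ := rescale (2 * I) (exp ℂ)

theorem expTwoIX_mul_rescale_neg : expTwoIX * rescale (-(2 * I)) (exp ℂ) = 1 := by
  rw [expTwoIX, exp_mul_exp_eq_exp_add, add_neg_cancel, rescale_zero_apply, constantCoeff_exp,
    map_one]

theorem rescale_two_expTwoIX : rescale 2 expTwoIX = expTwoIX ^ 2 := by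
  rw [expTwoIX, rescale_rescale, sq, exp_mul_exp_eq_exp_add]
  ring_nf

theorem derivative_expTwoIX : d⁄dX ℂ expTwoIX = C (2 * I) * expTwoIX := by
  rw [expTwoIX, derivative_rescale, derivative_exp]

theorem expTwoIX_ne_zero : expTwoIX ≠ 0 :=
  (isUnit_exp ℂ).map (rescale (2 * I)) |>.ne_zero

theorem expTwoIX_sub_one_ne_zero : expTwoIX - 1 ≠ 0 := by
  intro h
  have := congrArg (coeff 1) h
  simp [expTwoIX, coeff_rescale, coeff_exp] at this

/-- `X cot X = i X + 2 i X / (e^{2iX} - 1)`. -/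
def xCotSeries : ℂ⟦X⟧ := C I * X + rescale (2 * I) (bernoulliPowerSeries ℂ)

theorem xCotSeries_mul_expTwoIX_sub_one :
    xCotSeries * (expTwoIX - 1) = C I * X * (expTwoIX + 1) := by
  have h := congrArg (rescale (2 * I)) (bernoulliPowerSeries_mul_exp_sub_one ℂ)
  rw [map_mul, map_sub, map_one, rescale_X] at h
  rw [xCotSeries, expTwoIX, add_mul, h, map_mul, map_ofNat]
  ring

theorem coeff_xCotSeries {n : ℕ} (hn : n ≠ 1) :
    coeff n xCotSeries = (2 * I) ^ n * bernoulli n / n.factorial := by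
  simp [xCotSeries, bernoulliPowerSeries, coeff_rescale, coeff_X, hn]
  ring

/-- `X tan X = X cot X - 2X cot 2X`. -/
def xTanSeries : ℂ⟦X⟧ := xCotSeries - rescale 2 xCotSeries

theorem xTanSeries_mul_expTwoIX_add_one :
    xTanSeries * (expTwoIX + 1) = -(C I * X * (expTwoIX - 1)) := by
  have h2 := congrArg (rescale 2) xCotSeries_mul_expTwoIX_sub_one
  simp only [map_mul, map_sub, map_add, map_one, rescale_two_expTwoIX, rescale_X, rescale_C,
    map_ofNat] at h2
  refine mul_right_cancel₀ expTwoIX_sub_one_ne_zero ?_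
  rw [xTanSeries]
  linear_combination (expTwoIX + 1) * xCotSeries_mul_expTwoIX_sub_one - h2

theorem constantCoeff_xTanSeries : constantCoeff xTanSeries = 0 := by
  rw [xTanSeries, map_sub, ← coeff_zero_eq_constantCoeff_apply,
    ← coeff_zero_eq_constantCoeff_apply, coeff_rescale, pow_zero, one_mul, sub_self]

def tanSeries : ℂ⟦X⟧ := mk fun n => coeff (n + 1) xTanSeries

theorem tanSeries_mul_expTwoIX_add_one :
    tanSeries * (expTwoIX + 1) = -(C I * (expTwoIX - 1)) := by
  have hX : X * tanSeries = xTanSeries := by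
    rw [tanSeries, ← sub_const_eq_X_mul_shift, constantCoeff_xTanSeries, map_zero, sub_zero]
  refine mul_left_cancel₀ (X_ne_zero (R := ℂ)) ?_
  rw [← mul_assoc, hX, xTanSeries_mul_expTwoIX_add_one]
  ring

def secSqSeries : ℂ⟦X⟧ := d⁄dX ℂ tanSeries

theorem secSqSeries_mul_expTwoIX_add_one_sq :
    secSqSeries * (expTwoIX + 1) ^ 2 = 4 * expTwoIX := by
  have h := congrArg (d⁄dX ℂ) tanSeries_mul_expTwoIX_add_one
  simp only [Derivation.leibniz, map_add, map_sub, map_neg, Derivation.map_one_eq_zero,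
    derivative_expTwoIX, derivative_C, smul_eq_mul] at h
  have hI : C I * C I = (-1 : ℂ⟦X⟧) := by rw [← map_mul, I_mul_I, map_neg, map_one]
  rw [map_mul, map_ofNat] at h
  rw [secSqSeries]
  linear_combination (expTwoIX + 1) * h - 2 * C I * expTwoIX * tanSeries_mul_expTwoIX_add_one
    - 4 * expTwoIX * hI

theorem coeff_secSqSeries (n : ℕ) :
    coeff n secSqSeries =
      (n + 1) * (1 - 2 ^ (n + 2)) * (2 * I) ^ (n + 2) * bernoulli (n + 2) / (n + 2).factorial := by
  rw [secSqSeries, coeff_derivative, tanSeries, coeff_mk, xTanSeries, map_sub, coeff_rescale,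
    coeff_xCotSeries (by omega)]
  ring

def cosSqSeries : ℂ⟦X⟧ := C (1 / 4) * (expTwoIX + rescale (-(2 * I)) (exp ℂ) + 2)

theorem secSqSeries_mul_cosSqSeries : secSqSeries * cosSqSeries = 1 := by
  have h4 : C (1 / 4 : ℂ) * 4 = 1 := by rw [← map_ofNat C 4, ← map_mul]; norm_num
  refine mul_right_cancel₀ expTwoIX_ne_zero ?_
  rw [cosSqSeries]
  linear_combination C (1 / 4 : ℂ) * secSqSeries * expTwoIX_mul_rescale_neg
    + C (1 / 4 : ℂ) * secSqSeries_mul_expTwoIX_add_one_sq + expTwoIX * h4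

theorem coeff_secSqSeries_of_odd {n : ℕ} (hn : Odd n) : coeff n secSqSeries = 0 := by
  rw [coeff_secSqSeries, bernoulli_eq_zero_of_odd (hn.add_even even_two) (by omega)]
  simp

theorem coeff_secSqSeries_two_mul (j : ℕ) :
    coeff (2 * j) secSqSeries =
      (((-1 : ℚ) ^ j * (2 * j + 1) * 2 ^ (2 * j + 2) * (2 ^ (2 * j + 2) - 1) *
        bernoulli (2 * j + 2) / (Nat.factorial (2 * j + 2)) : ℚ) : ℂ) := by
  have hI : (2 * I) ^ (2 * j + 2) = -(-1) ^ j * 2 ^ (2 * j + 2) := by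
    rw [show 2 * j + 2 = 2 * (j + 1) by ring, pow_mul, mul_pow, I_sq, mul_pow, ← pow_mul]
    ring
  rw [coeff_secSqSeries, hI]
  push_cast
  ring

theorem hasSum_cosSqSeries (w : ℂ) :
    HasSum (fun n => coeff n cosSqSeries * w ^ n) (cos w ^ 2) := by
  have h2 : HasSum (fun n => coeff n (2 : ℂ⟦X⟧) * w ^ n) 2 := by
    convert hasSum_single (f := fun n => coeff n (2 : ℂ⟦X⟧) * w ^ n) 0 fun n hn => by
      simp [← map_ofNat C, coeff_C, hn]
    simp [← map_ofNat C]
  have hterm : (fun n => coeff n cosSqSeries * w ^ n) = fun n => 1 / 4 *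
      (coeff n (rescale (2 * I) (exp ℂ)) * w ^ n + coeff n (rescale (-(2 * I)) (exp ℂ)) * w ^ n
        + coeff n (2 : ℂ⟦X⟧) * w ^ n) := by
    ext n
    simp only [cosSqSeries, expTwoIX, coeff_C_mul, map_add]
    ring
  rw [hterm, cos_sq_eq_exp]
  exact (((hasSum_coeff_rescale_exp_mul_pow (2 * I) w).add
    (hasSum_coeff_rescale_exp_mul_pow (-(2 * I)) w)).add h2).mul_left (1 / 4)

theorem hasSum_secSqSeries {z : ℂ} (hz : ‖z‖ < Real.pi / 2) :
    HasSum (fun n => coeff n secSqSeries * z ^ n) (1 / cos z ^ 2) := by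
  obtain ⟨R, hzR, hRπ⟩ := exists_between hz
  lift R to ℝ≥0 using (norm_nonneg z).trans hzR.le
  have hR : 0 < R := by exact_mod_cast (norm_nonneg z).trans_lt hzR
  have hf : HasFPowerSeriesOnBall (fun w => 1 / cos w ^ 2)
      (cauchyPowerSeries (fun w => 1 / cos w ^ 2) 0 R) 0 R := by
    refine DifferentiableOn.hasFPowerSeriesOnBall (fun w hw => ?_) hR
    have := cos_ne_zero_of_norm_lt ((mem_closedBall_zero_iff.1 hw).trans_lt hRπ)
    exact ((differentiableAt_const 1).div ((differentiable_cos w).pow 2)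
      (pow_ne_zero 2 this)).differentiableWithinAt
  have hg := ((differentiable_cos.pow 2).hasFPowerSeriesOnBall 0 hR).mono
    (ENNReal.coe_pos.2 hR) le_top
  have hcos : PowerSeries.mk (cauchyPowerSeries (fun w => cos w ^ 2) 0 R).coeff = cosSqSeries :=
    eq_of_eventually_hasSum
      (eventually_of_mem (Metric.eball_mem_nhds 0 hg.r_pos) fun _ hw =>
        hg.hasSum_coeff_mul_pow hw)
      (Eventually.of_forall hasSum_cosSqSeries)
  have hinv : ∀ᶠ w in 𝓝 0, 1 / cos w ^ 2 * cos w ^ 2 = 1 := by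
    filter_upwards [Metric.ball_mem_nhds (0 : ℂ) (by positivity : 0 < Real.pi / 2)] with w hw
    exact one_div_mul_cancel (pow_ne_zero 2 (cos_ne_zero_of_norm_lt (mem_ball_zero_iff.1 hw)))
  have hsec : PowerSeries.mk (cauchyPowerSeries (fun w => 1 / cos w ^ 2) 0 R).coeff =
      secSqSeries := by
    refine left_inv_eq_right_inv (hcos ▸ hf.mk_coeff_mul_eq_one hg hinv) ?_
    rw [mul_comm, secSqSeries_mul_cosSqSeries]
  have := hf.hasSum_coeff_mul_pow (w := z) (by simpa using hzR)
  rwa [hsec] at this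

end

theorem stmt_5 (z : ℂ) (hz : ‖z‖ < Real.pi / 2) :
    HasSum (fun j : ℕ =>
        (((-1 : ℚ)^j * (2 * j + 1) * 2^(2 * j + 2) * (2^(2 * j + 2) - 1) *
            bernoulli (2 * j + 2) / (Nat.factorial (2 * j + 2)) : ℚ) : ℂ) * z^(2 * j))
      (1 / Complex.cos z ^ 2) := by
  have hodd : ∀ n ∉ Set.range (2 * ·), coeff n secSqSeries * z ^ n = 0 := fun n hn => by
    have : Odd n := Nat.not_even_iff_odd.1 fun ⟨j, hj⟩ => hn ⟨j, show 2 * j = n by omega⟩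
    rw [coeff_secSqSeries_of_odd this, zero_mul]
  simpa only [Function.comp_def, coeff_secSqSeries_two_mul] using
    ((mul_right_injective₀ two_ne_zero).hasSum_iff hodd).2 (hasSum_secSqSeries hz)
end

section
/- The identity −2·Σ_{n=1}^∞ 1/F_n² + Σ_{n=1}^∞ (−1)^{n+1}/F_n² + 5·Σ_{n=1}^∞ (−1)^{n+1}/L_n² = 0 holds, where F_n and L_n denote the Fibonacci and Lucas numbers. -/
/-!
Write `s = (-1)^n`. Cassini's identity gives `L_{n+1}^2 = 5 F_{n+1}^2 - 4 s`, and
`F_{2n+2} = F_{n+1} L_{n+1}`, so `5 s / L_{n+1}^2 = s / F_{n+1}^2 + 4 / F_{2n+2}^2`.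
Summing over `n`, `5 Σ s/L_{n+1}^2 = Σ s/F_{n+1}^2 + 4 Σ 1/F_{2n+2}^2`. On the other hand, in
`Σ (1 - s)/F_{n+1}^2` only the odd `n` survive, so it equals `2 Σ 1/F_{2n+2}^2`.
-/

open Nat

theorem Nat.fib_add_two_mul_fib_sub_fib_add_one_sq {R : Type*} [CommRing R] (n : ℕ) :
    (fib (n + 2) * fib n - fib (n + 1) ^ 2 : R) = (-1) ^ (n + 1) := by
  induction n with
  | zero => simp
  | succ n ih =>
    have hrec : (fib (n + 3) : R) = fib (n + 1) + fib (n + 2) := by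
      rw [fib_add_two, Nat.cast_add]
    have hrec' : (fib (n + 2) : R) = fib n + fib (n + 1) := by rw [fib_add_two, Nat.cast_add]
    rw [hrec, pow_succ]
    linear_combination (-1 : R) * ih - (fib (n + 2) : R) * hrec'

theorem Nat.fib_add_fib_add_two_sq {R : Type*} [CommRing R] (n : ℕ) :
    ((fib n + fib (n + 2) : R)) ^ 2 = 5 * fib (n + 1) ^ 2 - 4 * (-1) ^ n := by
  have hrec : (fib (n + 2) : R) = fib n + fib (n + 1) := by rw [fib_add_two, Nat.cast_add]
  have := fib_add_two_mul_fib_sub_fib_add_one_sq (R := R) n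
  rw [hrec] at this ⊢
  linear_combination (4 : R) * this

theorem summable_one_div_fib_add_one_sq :
    Summable fun n : ℕ => 1 / (fib (n + 1) : ℝ) ^ 2 := by
  have hzeta : Summable fun n : ℕ => 4 * (1 / ((n + 1 : ℕ) : ℝ) ^ 2) :=
    ((summable_nat_add_iff 1).mpr (Real.summable_one_div_nat_pow.mpr one_lt_two)).mul_left 4
  refine hzeta.of_nonneg_of_le (fun n => by positivity) fun n => ?_
  have hfib : 0 < fib (n + 1) := fib_pos.mpr n.succ_pos
  have hlin : ((n + 1 : ℕ) : ℝ) ≤ 2 * fib (n + 1) := by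
    have := le_fib_add_one (n + 1)
    exact_mod_cast (by omega : n + 1 ≤ 2 * fib (n + 1))
  rw [mul_one_div, div_le_div_iff₀ (by positivity) (by positivity)]
  nlinarith

theorem HasSum.sub_neg_one_pow_mul_of_odd {α : Type*} [Ring α] [TopologicalSpace α]
    [IsTopologicalRing α] {f : ℕ → α} {a : α} (hf : HasSum (fun n => f (2 * n + 1)) a) :
    HasSum (fun n => f n - (-1) ^ n * f n) (2 * a) := by
  have heven : HasSum (fun n => f (2 * n) - (-1) ^ (2 * n) * f (2 * n)) 0 := by
    simp only [(even_two_mul _).neg_one_pow, one_mul, sub_self]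
    exact hasSum_zero
  have hodd : HasSum (fun n => f (2 * n + 1) - (-1) ^ (2 * n + 1) * f (2 * n + 1)) (2 * a) := by
    simp only [(odd_two_mul_add_one _).neg_one_pow, neg_one_mul, sub_neg_eq_add, ← two_mul]
    exact hf.mul_left 2
  rw [← _root_.zero_add (2 * a)]
  exact HasSum.even_add_odd (f := fun n => f n - (-1) ^ n * f n) heven hodd

theorem five_mul_neg_one_pow_div_fib_add_fib_add_two_sq {K : Type*} [Field K] [CharZero K]
    (n : ℕ) :
    5 * ((-1) ^ n / ((fib n + fib (n + 2) : K)) ^ 2) =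
      (-1) ^ n / (fib (n + 1) : K) ^ 2 + 4 / (fib (2 * n + 2) : K) ^ 2 := by
  have hF : (fib (n + 1) : K) ≠ 0 := Nat.cast_ne_zero.mpr (fib_pos.mpr n.succ_pos).ne'
  have hL : (fib n + fib (n + 2) : K) ≠ 0 := by
    rw [← Nat.cast_add, Nat.cast_ne_zero]
    exact (Nat.add_pos_right _ (fib_pos.mpr (by omega))).ne'
  have hdouble : (fib (2 * n + 2) : K) = fib (n + 1) * (fib n + fib (n + 2)) := by
    rw [fib_two_mul_add_two, fib_add_two]
    push_cast
    ring
  have hsign : ((-1 : K) ^ n) ^ 2 = 1 := by rw [← pow_mul, pow_mul', neg_one_sq, one_pow]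
  rw [hdouble]
  field_simp
  linear_combination -(-1 : K) ^ n * fib_add_fib_add_two_sq (R := K) n + 4 * hsign

theorem stmt_16 :
    -2 * ∑' n : ℕ, 1 / ((Nat.fib (n + 1) : ℝ))^2 +
      ∑' n : ℕ, (-1 : ℝ)^n / ((Nat.fib (n + 1) : ℝ))^2 +
      5 * ∑' n : ℕ, (-1 : ℝ)^n / ((Nat.fib n + Nat.fib (n + 2) : ℝ))^2 = 0 := by
  have hfib := summable_one_div_fib_add_one_sq
  have halt : Summable fun n : ℕ => (-1 : ℝ) ^ n / (fib (n + 1) : ℝ) ^ 2 := by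
    simpa only [mul_one_div] using hfib.alternating
  have hodd : Summable fun n : ℕ => 1 / (fib (2 * n + 2) : ℝ) ^ 2 :=
    hfib.comp_injective (i := fun n : ℕ => 2 * n + 1) fun _ _ h => by simpa using h
  have hdiff : ∑' n : ℕ, 1 / (fib (n + 1) : ℝ) ^ 2
      - ∑' n : ℕ, (-1 : ℝ) ^ n / (fib (n + 1) : ℝ) ^ 2
      = 2 * ∑' n : ℕ, 1 / (fib (2 * n + 2) : ℝ) ^ 2 := by
    rw [← hfib.tsum_sub halt]
    simpa only [mul_one_div] using
      (HasSum.sub_neg_one_pow_mul_of_odd (f := fun n => 1 / (fib (n + 1) : ℝ) ^ 2)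
        hodd.hasSum).tsum_eq
  have hlucas : 5 * ∑' n : ℕ, (-1 : ℝ) ^ n / ((fib n + fib (n + 2) : ℝ)) ^ 2
      = ∑' n : ℕ, (-1 : ℝ) ^ n / (fib (n + 1) : ℝ) ^ 2
        + ∑' n : ℕ, 4 / (fib (2 * n + 2) : ℝ) ^ 2 := by
    have hodd4 : Summable fun n : ℕ => 4 / (fib (2 * n + 2) : ℝ) ^ 2 := by
      simpa only [mul_one_div] using hodd.mul_left 4
    rw [← tsum_mul_left, ← halt.tsum_add hodd4]
    exact tsum_congr five_mul_neg_one_pow_div_fib_add_fib_add_two_sq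
  have hodd_sum : ∑' n : ℕ, 4 / (fib (2 * n + 2) : ℝ) ^ 2
      = 4 * ∑' n : ℕ, 1 / (fib (2 * n + 2) : ℝ) ^ 2 := by
    simp only [← tsum_mul_left, mul_one_div]
  linarith
end
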